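/- arXiv:1111.4635 — 2 statements merged into one kernel-verified Lean document; each statement's English description precedes it below -/
import Mathlib

section
/- A 1-Lipschitz map f : ℤ₂ → ℤ₂ is bijective if and only if there exist c ∈ {0, 1} and a 1-Lipschitz map g : ℤ₂ → ℤ₂ such that f(x) = c + x + 2·g(x) for all x ∈ ℤ₂. -/
open Function Finset

/-- `a ≡ b (mod 2^s)` in the 2-adic integers. -/
def CongMod (s : ℕ) (a b : ℤ_[2]) : Prop := ‖a - b‖ ≤ ((2 : ℝ) ^ s)⁻¹

/-- `f` is 1-Lipschitz for the 2-adic norm (a T-function). -/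
def OneLip (f : ℤ_[2] → ℤ_[2]) : Prop := ∀ a b : ℤ_[2], ‖f a - f b‖ ≤ ‖a - b‖

/-- `f` is transitive modulo `2^n`. -/
def TransMod (f : ℤ_[2] → ℤ_[2]) (n : ℕ) : Prop :=
  ∀ x y : ℤ_[2], ∃ i < 2 ^ n, CongMod n (f^[i] x) y

/-- `f` is transitive (single cycle modulo every power of 2). -/
def TransitiveT (f : ℤ_[2] → ℤ_[2]) : Prop := ∀ n : ℕ, 1 ≤ n → TransMod f n

/-- `f` is bijective modulo `2^n`. -/
def BijMod (f : ℤ_[2] → ℤ_[2]) (n : ℕ) : Prop :=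
  (∀ a b : ℤ_[2], CongMod n (f a) (f b) → CongMod n a b) ∧
  (∀ y : ℤ_[2], ∃ x : ℤ_[2], CongMod n (f x) y)

/-- `f` is bijective (measure-preserving T-function). -/
def BijectiveT (f : ℤ_[2] → ℤ_[2]) : Prop := ∀ n : ℕ, 1 ≤ n → BijMod f n

/-- `g` is a derivative of `f` modulo `2^M` with parameter `K`. -/
def IsDerivMod (f g : ℤ_[2] → ℤ_[2]) (M K : ℕ) : Prop :=
  ∀ x h : ℤ_[2], ‖h‖ ≤ ((2 : ℝ) ^ K)⁻¹ →
    ‖f (x + h) - f x - g x * h‖ ≤ ((2 : ℝ) ^ M)⁻¹ * ‖h‖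

/-- The `n`-th binary digit of a 2-adic integer, as an element of `ZMod 2`.
`PadicInt.appr x n` is the unique integer in `{0, …, 2^n - 1}` congruent to `x` mod `2^n`. -/
noncomputable def delta (n : ℕ) (x : ℤ_[2]) : ZMod 2 :=
  (((x.appr (n + 1) - x.appr n) / 2 ^ n : ℕ) : ZMod 2)

/-!
For a 1-Lipschitz `f`, bijectivity modulo every `2^n` amounts to `f` being an isometry: if
`‖f a - f b‖` dropped below `‖a - b‖ = 2^(-k)`, then `f` would identify the classes of `a` and `b`
modulo `2^(k+1)`; conversely an isometry is injective, hence bijective, on each finite `ℤ/2^n`.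
Since every unit of `ℤ₂` is odd, two elements of the same norm `2^(-k)` agree modulo `2^(k+1)`,
so `f` is an isometry iff `‖(f a - f b) - (a - b)‖ ≤ ‖a - b‖ / 2`, that is, iff `f - id` is twice
a 1-Lipschitz map up to the constant `c ≡ f 0 (mod 2)`.
-/

lemma Isometry.of_norm_sub_sub_lt {E : Type*} [NormedAddCommGroup E] [IsUltrametricDist E]
    {f : E → E} (h : ∀ a b, a ≠ b → ‖(f a - f b) - (a - b)‖ < ‖a - b‖) : Isometry f := by
  refine Isometry.of_dist_eq fun a b => ?_
  rw [dist_eq_norm, dist_eq_norm]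
  rcases eq_or_ne a b with rfl | hab
  · simp
  have h_max := IsUltrametricDist.norm_add_eq_max_of_norm_ne_norm (h a b hab).ne
  rwa [sub_add_cancel, max_eq_right (h a b hab).le] at h_max

namespace PadicInt

lemma norm_two_mul (z : ℤ_[2]) : ‖2 * z‖ = 2⁻¹ * ‖z‖ := by
  rw [norm_mul]
  congr 1
  exact_mod_cast norm_p (p := 2)

lemma norm_le_half_of_norm_lt_one {z : ℤ_[2]} (h : ‖z‖ < 1) : ‖z‖ ≤ 2⁻¹ := by
  simpa using (norm_lt_pow_iff_norm_le_pow_sub_one z 0).mp (by simpa using h)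

lemma exists_eq_zero_or_one_norm_sub_lt_one (z : ℤ_[2]) :
    ∃ c : ℤ_[2], (c = 0 ∨ c = 1) ∧ ‖z - c‖ < 1 := by
  obtain ⟨n, hn, hz⟩ := exists_mem_range z
  rw [IsLocalRing.mem_maximalIdeal, mem_nonunits] at hz
  interval_cases n
  · exact ⟨0, Or.inl rfl, by simpa using hz⟩
  · exact ⟨1, Or.inr rfl, by simpa using hz⟩

lemma norm_sub_one_lt_one {u : ℤ_[2]} (hu : ‖u‖ = 1) : ‖u - 1‖ < 1 := by
  obtain ⟨c, rfl | rfl, hc⟩ := exists_eq_zero_or_one_norm_sub_lt_one u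
  · simp [hu] at hc
  · exact hc

lemma norm_sub_le_half_of_norm_eq_one {u v : ℤ_[2]} (hu : ‖u‖ = 1) (hv : ‖v‖ = 1) :
    ‖u - v‖ ≤ 2⁻¹ := by
  refine norm_le_half_of_norm_lt_one ?_
  calc ‖u - v‖ = ‖(u - 1) + -(v - 1)‖ := by ring_nf
    _ ≤ max ‖u - 1‖ ‖-(v - 1)‖ := nonarchimedean _ _
    _ < 1 := by rw [norm_neg]; exact max_lt (norm_sub_one_lt_one hu) (norm_sub_one_lt_one hv)

lemma norm_sub_le_half_mul_of_norm_eq {x y : ℤ_[2]} (h : ‖x‖ = ‖y‖) :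
    ‖x - y‖ ≤ 2⁻¹ * ‖x‖ := by
  rcases eq_or_ne x 0 with rfl | hx
  · simp [norm_eq_zero.mp (h.symm.trans norm_zero)]
  have hy : y ≠ 0 := by rintro rfl; simp [hx] at h
  have hval : y.valuation = x.valuation := by
    rw [norm_eq_zpow_neg_valuation hx, norm_eq_zpow_neg_valuation hy] at h
    exact_mod_cast neg_injective (zpow_right_injective₀ (by norm_num) (by norm_num) h).symm
  have hx_eq := unitCoeff_spec hx
  have hy_eq := unitCoeff_spec hy
  rw [hval] at hy_eq
  have hx_norm : ‖x‖ = ‖(2 : ℤ_[2]) ^ x.valuation‖ := by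
    conv_lhs => rw [hx_eq]
    rw [norm_mul, norm_units, one_mul]
    norm_cast
  calc ‖x - y‖ = ‖(unitCoeff hx : ℤ_[2]) - unitCoeff hy‖ * ‖(2 : ℤ_[2]) ^ x.valuation‖ := by
        rw [← norm_mul, sub_mul]
        conv_lhs => rw [hx_eq, hy_eq]
        norm_cast
    _ ≤ 2⁻¹ * ‖x‖ := by
        rw [hx_norm]
        gcongr
        exact norm_sub_le_half_of_norm_eq_one (norm_units _) (norm_units _)

end PadicInt

open PadicInt

lemma congMod_iff_toZModPow {n : ℕ} {a b : ℤ_[2]} :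
    CongMod n a b ↔ toZModPow n a = toZModPow n b := by
  have h2 : ((2 : ℝ) ^ n)⁻¹ = ((2 : ℕ) : ℝ) ^ (-n : ℤ) := by simp
  rw [CongMod, h2, norm_le_pow_iff_mem_span_pow, ← ker_toZModPow, RingHom.mem_ker, map_sub,
    sub_eq_zero]

lemma congMod_succ_iff {k : ℕ} {a b : ℤ_[2]} : CongMod (k + 1) a b ↔ ‖a - b‖ < (2 ^ k)⁻¹ := by
  have h := norm_lt_pow_iff_norm_le_pow_sub_one (a - b) (-k)
  rw [CongMod]
  simp only [Nat.cast_ofNat, zpow_neg, zpow_natCast] at h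
  rw [h, show -(k : ℤ) - 1 = -((k + 1 : ℕ) : ℤ) by push_cast; ring, zpow_neg, zpow_natCast]

lemma exists_norm_eq_inv_two_pow {z : ℤ_[2]} (hz : z ≠ 0) : ∃ k : ℕ, ‖z‖ = (2 ^ k)⁻¹ :=
  ⟨z.valuation, by rw [norm_eq_zpow_neg_valuation hz, zpow_neg, zpow_natCast, Nat.cast_ofNat]⟩

section

variable {f : ℤ_[2] → ℤ_[2]}

lemma Isometry.bijMod (hf : Isometry f) (n : ℕ) : BijMod f n := by
  have hcong : ∀ a b, CongMod n (f a) (f b) ↔ CongMod n a b := fun a b => by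
    rw [CongMod, CongMod, ← dist_eq_norm, ← dist_eq_norm, hf.dist_eq]
  refine ⟨fun a b => (hcong a b).mp, fun y => ?_⟩
  have : NeZero (2 ^ n) := ⟨pow_ne_zero _ two_ne_zero⟩
  let F : ZMod (2 ^ n) → ZMod (2 ^ n) := fun z => toZModPow n (f (z.val : ℤ_[2]))
  have hF : Injective F := fun z w hzw => by
    simpa using congMod_iff_toZModPow.mp ((hcong _ _).mp (congMod_iff_toZModPow.mpr hzw))
  obtain ⟨z, hz⟩ := Finite.injective_iff_surjective.mp hF (toZModPow n y)
  exact ⟨z.val, congMod_iff_toZModPow.mpr hz⟩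

lemma isometry_of_oneLip_of_bijectiveT (hf : OneLip f) (hb : BijectiveT f) : Isometry f := by
  refine Isometry.of_dist_eq fun a b => ?_
  rw [dist_eq_norm, dist_eq_norm]
  rcases eq_or_ne a b with rfl | hab
  · simp
  obtain ⟨k, hk⟩ := exists_norm_eq_inv_two_pow (sub_ne_zero.mpr hab)
  refine (hf a b).antisymm (not_lt.mp fun hlt => ?_)
  have hab_cong := (hb (k + 1) k.succ_pos).1 a b (congMod_succ_iff.mpr (hk ▸ hlt))
  exact (congMod_succ_iff.mp hab_cong).ne hk

lemma bijectiveT_iff_isometry (hf : OneLip f) : BijectiveT f ↔ Isometry f :=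
  ⟨isometry_of_oneLip_of_bijectiveT hf, fun hi n _ => hi.bijMod n⟩

lemma isometry_iff_norm_sub_sub_le :
    Isometry f ↔ ∀ a b, ‖(f a - f b) - (a - b)‖ ≤ 2⁻¹ * ‖a - b‖ := by
  refine ⟨fun hf a b => ?_, fun h => Isometry.of_norm_sub_sub_lt fun a b hab => ?_⟩
  · have h := hf.dist_eq a b
    rw [dist_eq_norm, dist_eq_norm] at h
    simpa [h] using norm_sub_le_half_mul_of_norm_eq h
  · have : 0 < ‖a - b‖ := norm_pos_iff.mpr (sub_ne_zero.mpr hab)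
    linarith [h a b]

lemma exists_explicit_form_iff :
    (∃ c : ℤ_[2], (c = 0 ∨ c = 1) ∧ ∃ g : ℤ_[2] → ℤ_[2], OneLip g ∧
        ∀ x : ℤ_[2], f x = c + x + 2 * g x) ↔
      ∀ a b, ‖(f a - f b) - (a - b)‖ ≤ 2⁻¹ * ‖a - b‖ := by
  constructor
  · rintro ⟨c, -, g, hg, hfg⟩ a b
    rw [show (f a - f b) - (a - b) = 2 * (g a - g b) by rw [hfg, hfg]; ring, norm_two_mul]
    exact mul_le_mul_of_nonneg_left (hg a b) (by norm_num)
  · intro h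
    obtain ⟨c, hc, hf0⟩ := exists_eq_zero_or_one_norm_sub_lt_one (f 0)
    have hdvd : ∀ x, (2 : ℤ_[2]) ∣ f x - x - c := fun x => by
      have hx : ‖(f x - f 0) - (x - 0)‖ < 1 := by
        linarith [h x 0, norm_le_one (x - 0)]
      have hlt : ‖f x - x - c‖ < 1 := by
        calc ‖f x - x - c‖ = ‖((f x - f 0) - (x - 0)) + (f 0 - c)‖ := by ring_nf
          _ ≤ max ‖(f x - f 0) - (x - 0)‖ ‖f 0 - c‖ := nonarchimedean _ _
          _ < 1 := max_lt hx hf0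
      exact_mod_cast (norm_lt_one_iff_dvd _).mp hlt
    choose g hg using hdvd
    refine ⟨c, hc, g, fun a b => ?_, fun x => by linear_combination hg x⟩
    have hab := h a b
    rw [show (f a - f b) - (a - b) = 2 * (g a - g b) by linear_combination hg a - hg b,
      norm_two_mul] at hab
    linarith

end

/-- Explicit form of bijective T-functions: `f(x) = c + x + 2 g(x)` with `c ∈ {0,1}`. -/
theorem bijective_explicit_form (f : ℤ_[2] → ℤ_[2]) (hf : OneLip f) :
    BijectiveT f ↔
      ∃ c : ℤ_[2], (c = 0 ∨ c = 1) ∧ ∃ g : ℤ_[2] → ℤ_[2], OneLip g ∧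
        ∀ x : ℤ_[2], f x = c + x + 2 * g x := by
  rw [bijectiveT_iff_isometry hf, isometry_iff_norm_sub_sub_le, exists_explicit_form_iff]
end

section
/- Let f : ℤ₂ → ℤ₂ be a 1-Lipschitz transitive map, x₀ ∈ ℤ₂ and n ∈ ℕ. Then for every i ≥ 0 one has δ_n(f^[i+2^n](x₀)) = δ_n(f^[i](x₀)) + 1 in ℤ/2ℤ; consequently the n-th coordinate sequence i ↦ δ_n(f^[i](x₀)) is periodic with period 2^(n+1), and it is not periodic with any period T satisfying 0 < T < 2^(n+1). -/
/-!
Transitivity modulo `2^m` makes the map induced by `f` on `ℤ/2^mℤ` a single cycle of length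
`2^m`. Hence `f^[2^n] y ≡ y` modulo `2^n` but not modulo `2^(n+1)`: the two points share their
lowest `n` binary digits and differ in the `n`-th one, which is the half-period flip. Flipping
twice gives the period `2^(n+1)`; a smaller period would force the minimal period of the
sequence to be a proper divisor of `2^(n+1)`, hence a divisor of `2^n`, contradicting the flip.
-/

open Function Finset

open PadicInt

lemma congMod_iff_toZModPow_eq (m : ℕ) (a b : ℤ_[2]) :
    CongMod m a b ↔ toZModPow m a = toZModPow m b := by
  rw [CongMod, show ((2 : ℝ) ^ m)⁻¹ = ((2 : ℕ) : ℝ) ^ (-(m : ℤ)) by simp,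
    norm_le_pow_iff_mem_span_pow, ← ker_toZModPow, RingHom.mem_ker, map_sub, sub_eq_zero]

lemma appr_eq_of_congMod {m : ℕ} {a b : ℤ_[2]} (h : CongMod m a b) : a.appr m = b.appr m := by
  have h' : ((a.appr m : ℕ) : ZMod (2 ^ m)).val = ((b.appr m : ℕ) : ZMod (2 ^ m)).val :=
    congr_arg ZMod.val ((congMod_iff_toZModPow_eq m a b).mp h)
  rwa [ZMod.val_cast_of_lt (a.appr_lt m), ZMod.val_cast_of_lt (b.appr_lt m)] at h'

lemma appr_succ_eq_add_delta (x : ℤ_[2]) (n : ℕ) :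
    ∃ d < 2, x.appr (n + 1) = x.appr n + 2 ^ n * d ∧ delta n x = d := by
  obtain ⟨d, hd⟩ := dvd_appr_sub_appr x n (n + 1) n.le_succ
  have hmono := x.appr_mono (Nat.le_add_right n 1)
  have hsucc : x.appr (n + 1) = x.appr n + 2 ^ n * d := by omega
  refine ⟨d, ?_, hsucc, by rw [delta, hd, Nat.mul_div_cancel_left _ (Nat.two_pow_pos n)]⟩
  have hlt := x.appr_lt (n + 1)
  rw [pow_succ] at hlt
  nlinarith [Nat.two_pow_pos n]

lemma delta_eq_add_one_of_congMod {n : ℕ} {y z : ℤ_[2]} (h : CongMod n z y)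
    (hsucc : ¬ CongMod (n + 1) z y) : delta n z = delta n y + 1 := by
  obtain ⟨c, hc, hz, hδz⟩ := appr_succ_eq_add_delta z n
  obtain ⟨b, hb, hy, hδy⟩ := appr_succ_eq_add_delta y n
  have hcb : c ≠ b := by
    rintro rfl
    refine hsucc ((congMod_iff_toZModPow_eq _ _ _).mpr ?_)
    change ((z.appr (n + 1) : ℕ) : ZMod (2 ^ (n + 1))) = y.appr (n + 1)
    rw [hz, hy, appr_eq_of_congMod h]
  rw [hδz, hδy]
  interval_cases c <;> interval_cases b <;> first | contradiction | decide

theorem minimalPeriod_eq_card_of_forall_exists_iterate_eq {α : Type*} [Fintype α] {F : α → α}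
    (h : ∀ y z, ∃ i, F^[i] y = z) (x : α) : minimalPeriod F x = Fintype.card α := by
  obtain ⟨i, hi⟩ := h (F x) x
  have hpos : 0 < minimalPeriod F x := IsPeriodicPt.minimalPeriod_pos i.succ_pos <| by
    rwa [IsPeriodicPt, IsFixedPt, iterate_succ_apply]
  refine le_antisymm minimalPeriod_le_card ((Fintype.card_le_of_surjective
    (fun k : Fin (minimalPeriod F x) => F^[k] x) fun z => ?_).trans_eq (Fintype.card_fin _))
  obtain ⟨j, rfl⟩ := h x z
  exact ⟨⟨j % minimalPeriod F x, Nat.mod_lt j hpos⟩, iterate_mod_minimalPeriod_eq⟩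

/-- Independent of the chosen lifts `z.val` when `f` is 1-Lipschitz. -/
noncomputable def residueMap (f : ℤ_[2] → ℤ_[2]) (m : ℕ) : ZMod (2 ^ m) → ZMod (2 ^ m) :=
  fun z => toZModPow m (f (z.val : ℤ_[2]))

lemma toZModPow_natCast_val (m : ℕ) (z : ZMod (2 ^ m)) : toZModPow m (z.val : ℤ_[2]) = z := by
  rw [map_natCast, ZMod.natCast_val, ZMod.cast_id]

section ResidueMap

variable {f : ℤ_[2] → ℤ_[2]} {m : ℕ}

lemma residueMap_toZModPow (hf : OneLip f) (a : ℤ_[2]) :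
    residueMap f m (toZModPow m a) = toZModPow m (f a) :=
  (congMod_iff_toZModPow_eq m _ _).mp <| (hf _ _).trans <|
    (congMod_iff_toZModPow_eq m _ _).mpr (toZModPow_natCast_val m _)

lemma residueMap_iterate_toZModPow (hf : OneLip f) (i : ℕ) (a : ℤ_[2]) :
    (residueMap f m)^[i] (toZModPow m a) = toZModPow m (f^[i] a) := by
  induction i with
  | zero => rfl
  | succ i ih => rw [iterate_succ_apply', ih, residueMap_toZModPow hf, iterate_succ_apply']

lemma TransMod.minimalPeriod_residueMap (hf : OneLip f) (h : TransMod f m) (z : ZMod (2 ^ m)) :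
    minimalPeriod (residueMap f m) z = 2 ^ m := by
  rw [minimalPeriod_eq_card_of_forall_exists_iterate_eq (fun y z => ?_) z, ZMod.card]
  obtain ⟨i, -, hi⟩ := h (y.val : ℤ_[2]) (z.val : ℤ_[2])
  refine ⟨i, ?_⟩
  rw [← toZModPow_natCast_val m y, residueMap_iterate_toZModPow hf,
    (congMod_iff_toZModPow_eq m _ _).mp hi, toZModPow_natCast_val]

lemma TransMod.congMod_iterate_two_pow (hf : OneLip f) (h : TransMod f m) (y : ℤ_[2]) :
    CongMod m (f^[2 ^ m] y) y := by
  have hp := iterate_minimalPeriod (f := residueMap f m) (x := toZModPow m y)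
  rwa [h.minimalPeriod_residueMap hf, residueMap_iterate_toZModPow hf,
    ← congMod_iff_toZModPow_eq] at hp

lemma TransMod.not_congMod_iterate (hf : OneLip f) (h : TransMod f m) (y : ℤ_[2]) {j : ℕ}
    (hj0 : j ≠ 0) (hj : j < 2 ^ m) : ¬ CongMod m (f^[j] y) y := by
  rw [congMod_iff_toZModPow_eq, ← residueMap_iterate_toZModPow hf]
  exact not_isPeriodicPt_of_pos_of_lt_minimalPeriod hj0 (by rwa [h.minimalPeriod_residueMap hf])

end ResidueMap

lemma transMod_zero (f : ℤ_[2] → ℤ_[2]) : TransMod f 0 :=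
  fun x y => ⟨0, Nat.one_pos, by simpa [CongMod] using PadicInt.norm_le_one _⟩

lemma delta_iterate_two_pow {f : ℤ_[2] → ℤ_[2]} {n : ℕ} (hf : OneLip f) (hn : TransMod f n)
    (hn1 : TransMod f (n + 1)) (y : ℤ_[2]) : delta n (f^[2 ^ n] y) = delta n y + 1 :=
  delta_eq_add_one_of_congMod (hn.congMod_iterate_two_pow hf y)
    (hn1.not_congMod_iterate hf y (pow_ne_zero n two_ne_zero) (Nat.pow_lt_pow_succ one_lt_two))

-- Periods of a sequence are the periods of a point of the shift map, so they are the multiples of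
-- its minimal period.
lemma periodic_iff_isPeriodicPt_shift {α : Type*} {y : ℕ → α} {T : ℕ} :
    Periodic y T ↔ IsPeriodicPt (fun s : ℕ → α => fun i => s (i + 1)) T y := by
  have hshift : ∀ k, (fun s : ℕ → α => fun i => s (i + 1))^[k] y = fun i => y (i + k) := by
    intro k
    induction k with
    | zero => rfl
    | succ k ih => ext i; rw [iterate_succ_apply', ih]; exact congr_arg y (by omega)
  rw [IsPeriodicPt, IsFixedPt, hshift, funext_iff]
  rfl

lemma Function.Periodic.prime_pow_of_lt {α : Type*} {y : ℕ → α} {p n T : ℕ} (hp : p.Prime)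
    (h : Periodic y (p ^ (n + 1))) (hT : Periodic y T) (hT0 : 0 < T) (hTlt : T < p ^ (n + 1)) :
    Periodic y (p ^ n) := by
  rw [periodic_iff_isPeriodicPt_shift] at *
  obtain ⟨k, hk, hpk⟩ := (Nat.dvd_prime_pow hp).mp h.minimalPeriod_dvd
  have hkn : k ≤ n := by
    by_contra! hnk
    have := Nat.le_of_dvd hT0 hT.minimalPeriod_dvd
    rw [hpk, show k = n + 1 by omega] at this
    omega
  exact isPeriodicPt_iff_minimalPeriod_dvd.mpr (hpk ▸ pow_dvd_pow p hkn)

/-- Half-period property of coordinate sequences: the second half of the period is the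
negation of the first half; the `n`-th coordinate sequence has shortest period `2^(n+1)`. -/
theorem coordinate_sequence_period (f : ℤ_[2] → ℤ_[2])
    (hf : OneLip f) (hft : TransitiveT f) (x₀ : ℤ_[2]) (n : ℕ) :
    (∀ i : ℕ, delta n (f^[i + 2 ^ n] x₀) = delta n (f^[i] x₀) + 1) ∧
    (∀ i : ℕ, delta n (f^[i + 2 ^ (n + 1)] x₀) = delta n (f^[i] x₀)) ∧
    (∀ T : ℕ, 0 < T → T < 2 ^ (n + 1) →
      ¬ (∀ i : ℕ, delta n (f^[i + T] x₀) = delta n (f^[i] x₀))) := by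
  have hn : TransMod f n := by
    rcases n.eq_zero_or_pos with rfl | hpos
    · exact transMod_zero f
    · exact hft n hpos
  have hflip (i : ℕ) : delta n (f^[i + 2 ^ n] x₀) = delta n (f^[i] x₀) + 1 := by
    rw [add_comm, iterate_add_apply]
    exact delta_iterate_two_pow hf hn (hft (n + 1) n.succ_pos) _
  have hper : Periodic (fun i => delta n (f^[i] x₀)) (2 ^ (n + 1)) := fun i => by
    dsimp only
    rw [pow_succ, mul_two, ← add_assoc, hflip, hflip, add_assoc, CharTwo.add_self_eq_zero, add_zero]
  refine ⟨hflip, hper, fun T hT0 hT hTper => ?_⟩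
  have h2n := hper.prime_pow_of_lt Nat.prime_two hTper hT0 hT 0
  simp only [hflip] at h2n
  exact one_ne_zero (add_eq_left.mp h2n)
end
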